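/- For an interval module M over ℝⁿ and its closure module M̄ (the interval module on the topological closure of I_M), the interleaving distance satisfies d_I(M, M̄) = 0; consequently d_I(M,N) = d_I(M̄, N̄) for all interval modules M, N. -/

import Mathlib

open scoped ENNReal NNReal
open Filter
noncomputable section
attribute [local instance] Classical.propDecidable
set_option linter.unusedVariables false

/-- Points of the poset ℝⁿ. The product instance gives the pointwise partial order
and the sup-norm metric. -/
abbrev Pt (n : ℕ) := Fin n → ℝ

/-- The diagonal vector δ⃗ = (δ,...,δ). -/
def diag (n : ℕ) (δ : ℝ) : Pt n := fun _ => δ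

lemma le_add_diag {n : ℕ} (x : Pt n) {δ : ℝ} (hδ : 0 ≤ δ) : x ≤ x + diag n δ :=
  fun _ => le_add_of_nonneg_right hδ

/-- A (p.f.d.-agnostic) persistence module over the poset ℝⁿ with values in
k-vector spaces: a functor from ℝⁿ to Vec. -/
structure PersMod (n : ℕ) (k : Type*) [Field k] where
  V : Pt n → Type*
  [addgrp : ∀ x, AddCommGroup (V x)]
  [mod : ∀ x, Module k (V x)]
  ρ : ∀ {x y : Pt n}, x ≤ y → (V x →ₗ[k] V y)
  ρ_id : ∀ x : Pt n, ρ (le_refl x) = LinearMap.id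
  ρ_comp : ∀ {x y z : Pt n} (h1 : x ≤ y) (h2 : y ≤ z), ρ (h1.trans h2) = (ρ h2).comp (ρ h1)

attribute [instance] PersMod.addgrp PersMod.mod

variable {n : ℕ} {k : Type*} [Field k]

/-- A morphism (natural transformation) of persistence modules. -/
structure PersHom (M N : PersMod n k) where
  app : ∀ x, M.V x →ₗ[k] N.V x
  natural : ∀ {x y : Pt n} (h : x ≤ y), (app y).comp (M.ρ h) = (N.ρ h).comp (app x)

/-- A δ-interleaving between M and N: families φ_x : M_x → N_{x+δ⃗},
ψ_x : N_x → M_{x+δ⃗} satisfying square and triangular commutativity. -/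
def PersMod.Interleaved (M N : PersMod n k) (δ : ℝ≥0) : Prop :=
  ∃ (φ : ∀ x : Pt n, M.V x →ₗ[k] N.V (x + diag n (δ : ℝ)))
    (ψ : ∀ x : Pt n, N.V x →ₗ[k] M.V (x + diag n (δ : ℝ))),
    (∀ {x y : Pt n} (h : x ≤ y),
        (φ y).comp (M.ρ h) = (N.ρ (add_le_add_left h _)).comp (φ x)) ∧
    (∀ {x y : Pt n} (h : x ≤ y),
        (ψ y).comp (N.ρ h) = (M.ρ (add_le_add_left h _)).comp (ψ x)) ∧
    (∀ x : Pt n, M.ρ ((le_add_diag x δ.coe_nonneg).trans (le_add_diag _ δ.coe_nonneg))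
        = (ψ (x + diag n (δ : ℝ))).comp (φ x)) ∧
    (∀ x : Pt n, N.ρ ((le_add_diag x δ.coe_nonneg).trans (le_add_diag _ δ.coe_nonneg))
        = (φ (x + diag n (δ : ℝ))).comp (ψ x))

/-- The interleaving distance (∞ if no interleaving exists). -/
def PersMod.dI (M N : PersMod n k) : ℝ≥0∞ :=
  ⨅ (δ : ℝ≥0) (_ : M.Interleaved N δ), (δ : ℝ≥0∞)

/-- The diagonal shift M_{→d}. -/
def PersMod.dshift (M : PersMod n k) (d : ℝ) : PersMod n k where
  V x := M.V (x + diag n d)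
  ρ h := M.ρ (add_le_add_left h _)
  ρ_id x := M.ρ_id _
  ρ_comp h1 h2 := M.ρ_comp _ _

/-- M is c-trivial: every structure map over a diagonal shift by c is zero. -/
def PersMod.DTrivial (M : PersMod n k) (c : ℝ≥0) : Prop :=
  ∀ x : Pt n, M.ρ (le_add_diag x c.coe_nonneg) = 0

/-- The 1-parameter slice of M along the diagonal line through x. -/
def PersMod.slice (M : PersMod n k) (x : Pt n) : PersMod 1 k where
  V t := M.V (x + diag n (t 0))
  ρ {t t'} h := M.ρ (fun i => add_le_add_right (h 0) (x i))
  ρ_id t := M.ρ_id _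
  ρ_comp h1 h2 := M.ρ_comp _ _

/-- δ* = sup over diagonal lines of the slice interleaving distances. -/
def deltaStar (M N : PersMod n k) : ℝ≥0∞ :=
  ⨆ x : Pt n, (M.slice x).dI (N.slice x)

/-- Finite direct sum of persistence modules. -/
def dirSum {ι : Type} [Fintype ι] (Ms : ι → PersMod n k) : PersMod n k where
  V x := ∀ i, (Ms i).V x
  ρ h := LinearMap.pi (fun i => ((Ms i).ρ h).comp (LinearMap.proj i))
  ρ_id x := by
    apply LinearMap.ext; intro v; funext i
    simp [(Ms i).ρ_id]
  ρ_comp h1 h2 := by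
    apply LinearMap.ext; intro v; funext i
    show ((Ms i).ρ (h1.trans h2)) (v i) = _
    rw [(Ms i).ρ_comp h1 h2]; rfl

/-- Zigzag reachability inside a set: p ≤ p₁ ≥ p₂ ≤ ... with all points in A. -/
def Zigzag (A : Set (Pt n)) : Pt n → Pt n → Prop :=
  Relation.ReflTransGen (fun a b => a ∈ A ∧ b ∈ A ∧ (a ≤ b ∨ b ≤ a))

/-- An interval: nonempty, order-convex, zigzag-connected. -/
def IsPInterval (I : Set (Pt n)) : Prop :=
  I.Nonempty ∧ (∀ p ∈ I, ∀ q ∈ I, ∀ r, p ≤ r → r ≤ q → r ∈ I) ∧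
    ∀ p ∈ I, ∀ q ∈ I, Zigzag I p q

/-- Q is a (zigzag-)connected component of A. -/
def IsComponent (A Q : Set (Pt n)) : Prop :=
  ∃ p ∈ A, Q = {q | Zigzag A p q}

/-- The fibre of the interval module with interval I: k on I, 0 elsewhere,
realised as a submodule of k. -/
def subOf (k : Type*) [Field k] (I : Set (Pt n)) (x : Pt n) : Submodule k k :=
  if x ∈ I then ⊤ else ⊥

/-- The canonical map between fibres: identity within I, zero otherwise. -/
def stepFun (I : Set (Pt n)) (x y : Pt n) :
    ↥(subOf k I x) →ₗ[k] ↥(subOf k I y) where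
  toFun v := ⟨if y ∈ I then (v : k) else 0, by
    by_cases hy : y ∈ I
    · rw [if_pos hy]; show _ ∈ (if y ∈ I then _ else _); rw [if_pos hy]; exact Submodule.mem_top
    · rw [if_neg hy]; exact Submodule.zero_mem _⟩
  map_add' a b := by
    by_cases hy : y ∈ I <;> · apply Subtype.ext; simp [hy]
  map_smul' c a := by
    by_cases hy : y ∈ I <;> · apply Subtype.ext; simp [hy]

/-- The interval module with interval I. -/
def IntervalMod (k : Type*) [Field k] (I : Set (Pt n)) (hI : IsPInterval I) :
    PersMod n k where
  V x := ↥(subOf k I x)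
  ρ {x y} _ := stepFun I x y
  ρ_id x := by
    apply LinearMap.ext; intro v
    apply Subtype.ext
    by_cases hx : x ∈ I
    · simp [stepFun, hx]
    · have hv : (v : k) = 0 := by
        have h2 := v.2; change _ ∈ (if x ∈ I then _ else _) at h2; rw [if_neg hx] at h2
        exact (Submodule.mem_bot k).1 h2
      simp [stepFun, hx, hv]
  ρ_comp {x y z} h1 h2 := by
    apply LinearMap.ext; intro v
    apply Subtype.ext
    by_cases hz : z ∈ I
    · by_cases hy : y ∈ I
      · simp [stepFun, hy, hz]
      · have hx : x ∉ I := fun hx => hy (hI.2.1 x hx z hz y h1 h2)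
        have hv : (v : k) = 0 := by
          have h2 := v.2; change _ ∈ (if x ∈ I then _ else _) at h2; rw [if_neg hx] at h2
          exact (Submodule.mem_bot k).1 h2
        simp [stepFun, hy, hz, hv]
    · simp [stepFun, hz]

/-- Lower boundary L(I). -/
def lowerBd (I : Set (Pt n)) : Set (Pt n) :=
  {x | x ∈ closure I ∧ ∀ y : Pt n, (∀ i, y i < x i) → y ∉ I}

/-- Upper boundary U(I). -/
def upperBd (I : Set (Pt n)) : Set (Pt n) :=
  {x | x ∈ closure I ∧ ∀ y : Pt n, (∀ i, x i < y i) → y ∉ I}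

/-- Diagonal distance dl(x, A): the infimum of sup-norm distances from x to
points of A along the diagonal line Δ_x, ∞ when Δ_x ∩ A = ∅. -/
def dl (x : Pt n) (A : Set (Pt n)) : ℝ≥0∞ :=
  ⨅ (α : ℝ) (_ : x + diag n α ∈ A), ENNReal.ofReal |α|

/-- d_triv^{(M,N)}(x) = max(dl(x,U(I_M))/2, dl(x,L(I_N))/2). -/
def dtriv (IM IN : Set (Pt n)) (x : Pt n) : ℝ≥0∞ :=
  max (dl x (upperBd IM) / 2) (dl x (lowerBd IN) / 2)

/-- An intersection component with interval Q is δ_{(M,N)}-trivializable. -/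
def Trivializable (IM IN Q : Set (Pt n)) (δ : ℝ≥0∞) : Prop :=
  ∀ x ∈ Q, dtriv IM IN x < δ

/-- (M,N)-validity of an intersection component with interval Q. -/
def MNValid (IM IN Q : Set (Pt n)) : Prop :=
  ∀ x ∈ Q, (∀ y : Pt n, y ≤ x → y ∈ IM → y ∈ IN) ∧
    (∀ z : Pt n, x ≤ z → z ∈ IN → z ∈ IM)

/-- The interval of the shifted module N_{→d}. -/
def shiftSet (I : Set (Pt n)) (d : ℝ) : Set (Pt n) := {x | x + diag n d ∈ I}

/-- A vertex of (the boundary of) a set: a boundary point through which no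
nontrivial line segment of the boundary passes. -/
def IsVertex (I : Set (Pt n)) (x : Pt n) : Prop :=
  x ∈ frontier I ∧
    ¬ ∃ v : Pt n, v ≠ 0 ∧ ∃ ε > (0:ℝ), ∀ t : ℝ, |t| < ε → x + t • v ∈ frontier I

/-- An axis-aligned (possibly degenerate) rectangle. -/
def IsRect (R : Set (Pt n)) : Prop := ∃ a b : Pt n, a ≤ b ∧ R = Set.Icc a b

/-- A discretely presented interval: a finite union of rectangles. -/
def DiscPresented (I : Set (Pt n)) : Prop :=
  ∃ F : Finset (Set (Pt n)), (∀ R ∈ F, IsRect R) ∧ I = ⋃ R ∈ F, (R : Set (Pt n))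

/-- f is a facet of I orthogonal to direction i: contained in a hyperplane
{y_i = c}, contained in the lower or upper boundary, and (n−1)-dimensional
(contains a full hyperplane patch around one of its points). -/
def IsFacetDir (I : Set (Pt n)) (f : Set (Pt n)) (i : Fin n) : Prop :=
  ∃ c : ℝ, f ⊆ {y | y i = c} ∧ (f ⊆ lowerBd I ∨ f ⊆ upperBd I) ∧
    ∃ z ∈ f, ∃ ε > (0:ℝ), ∀ y : Pt n, y i = c → dist y z < ε → y ∈ f

/-- The set D(x) of the four diagonal boundary distances. -/
def candD (IM IN : Set (Pt n)) (x : Pt n) : Set ℝ≥0∞ :=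
  {dl x (lowerBd IM), dl x (lowerBd IN), dl x (upperBd IM), dl x (upperBd IN)}

/-- The candidate set S. -/
def candS (IM IN : Set (Pt n)) : Set ℝ≥0∞ :=
  {d | ∃ x : Pt n, (IsVertex IM x ∨ IsVertex IN x) ∧
    (d ∈ candD IM IN x ∨ 2 * d ∈ candD IM IN x)}

/-- One-sided limit lim_{ε→0+} f(x − ε v) (junk value if the limit fails to exist). -/
def dlim (f : Pt n → ℤ) (x v : Pt n) : ℤ :=
  limUnder (nhdsWithin (0:ℝ) (Set.Ioi 0)) (fun ε : ℝ => f (x - ε • v))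

/-- The indicator vector Σ_{i ∈ s} e_i. -/
def basisVec (n : ℕ) (s : Finset (Fin n)) : Pt n := fun i => if i ∈ s then 1 else 0

/-- The differential Δf(x) = Σ_k (−1)^k Σ_{|s|=k} lim_{ε→0+} f(x − ε Σ_{i∈s} e_i). -/
def diffl (f : Pt n → ℤ) (x : Pt n) : ℤ :=
  ∑ s : Finset (Fin n), (-1 : ℤ) ^ s.card * dlim f x (basisVec n s)

/-- Right continuity of f : ℝⁿ → ℤ. -/
def RightCont (f : Pt n → ℤ) : Prop :=
  ∀ x : Pt n, Filter.Tendsto f (nhdsWithin x (Set.Ici x)) (nhds (f x))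

/-- A nice function: right continuous, finitely supported differential,
support bounded below. -/
def NiceFn (f : Pt n → ℤ) : Prop :=
  RightCont f ∧ {x | diffl f x ≠ 0}.Finite ∧ ∃ a : ℝ, ∀ x, f x ≠ 0 → ∀ i, a ≤ x i

/-- Positive part Δf₊. -/
def difflp (f : Pt n → ℤ) (x : Pt n) : ℤ := max (diffl f x) 0
/-- Negative part Δf₋. -/
def difflm (f : Pt n → ℤ) (x : Pt n) : ℤ := min (diffl f x) 0

/-- Σ_{y ≤ x} g(y), as a finite sum over the support. -/
def sumLe (g : Pt n → ℤ) (x : Pt n) : ℤ := ∑ᶠ y ∈ {y : Pt n | y ≤ x}, g y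

/-- The δ-extension f^{+δ}(x) = f_{Σ+}(x+δ⃗) + f_{Σ−}(x−δ⃗). -/
def extend (f : Pt n → ℤ) (δ : ℝ) (x : Pt n) : ℤ :=
  sumLe (difflp f) (x + diag n δ) + sumLe (difflm f) (x - diag n δ)

/-- The δ-shrinking f^{−δ}(x) = f_{Σ−}(x+δ⃗) + f_{Σ+}(x−δ⃗). -/
def shrink (f : Pt n → ℤ) (δ : ℝ) (x : Pt n) : ℤ :=
  sumLe (difflm f) (x + diag n δ) + sumLe (difflp f) (x - diag n δ)

/-- d₊(f,g) = inf{δ : f ≤ g^{+δ}, g ≤ f^{+δ}}. -/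
def dplus (f g : Pt n → ℤ) : ℝ≥0∞ :=
  ⨅ (δ : ℝ≥0) (_ : (∀ x, f x ≤ extend g δ x) ∧ (∀ x, g x ≤ extend f δ x)), (δ : ℝ≥0∞)

/-- d₋(f,g) = inf{δ : f ≥ g^{−δ}, g ≥ f^{−δ}}. -/
def dminus (f g : Pt n → ℤ) : ℝ≥0∞ :=
  ⨅ (δ : ℝ≥0) (_ : (∀ x, shrink g δ x ≤ f x) ∧ (∀ x, shrink f δ x ≤ g x)), (δ : ℝ≥0∞)

/-- The dimension distance d₀ = min(d₋, d₊). -/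
def d0 (f g : Pt n → ℤ) : ℝ≥0∞ := min (dminus f g) (dplus f g)

/-- The dimension function dm M(x) = dim M_x (as an integer). -/
def dmFun (M : PersMod n k) : Pt n → ℤ := fun x => (Module.finrank k (M.V x) : ℤ)

/-- A nice persistence module: all structure maps over sufficiently small
diagonal shifts are injective or surjective. -/
def PersMod.Nice (M : PersMod n k) : Prop :=
  ∃ ε₀ > (0:ℝ), ∀ ε : ℝ, ∀ h0 : 0 < ε, ε < ε₀ → ∀ x : Pt n,
    Function.Injective (M.ρ (le_add_diag x h0.le)) ∨
      Function.Surjective (M.ρ (le_add_diag x h0.le))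

/-- Composition ρ_i ∘ ... ∘ ρ₁ of a chain of linear maps. -/
def chainComp {K : Type*} [Field K] (V : ℕ → Type*) [∀ i, AddCommGroup (V i)]
    [∀ i, Module K (V i)] (ρ : ∀ i, V i →ₗ[K] V (i+1)) : ∀ i, V 0 →ₗ[K] V i
  | 0 => LinearMap.id
  | (i+1) => (ρ i).comp (chainComp V ρ i)


/-!
For δ > 0 the interval module of `I` and that of its closure `Ī` are δ-interleaved by the maps
that are the identity of `k` wherever source and target are both nonzero. That these maps commute
as required reduces to order-convexity of `I` and `Ī` and to the fact that every point `x` of `Ī`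
has points of `I` below `x + δ⃗` and above `x - δ⃗`. Hence `d_I(M, M̄) = 0`, and the second claim
follows from the triangle inequality for `d_I`, which comes from composing interleavings.
-/

lemma add_diag_add_diag {n : ℕ} (x : Pt n) {a b c : ℝ} (h : a + b = c) :
    x + diag n a + diag n b = x + diag n c := by
  funext i
  simp only [Pi.add_apply, diag, ← h]
  ring

lemma lt_add_diag_apply {n : ℕ} (x : Pt n) {δ : ℝ} (hδ : 0 < δ) (i : Fin n) :
    x i < (x + diag n δ) i :=
  lt_add_of_pos_right _ hδ

section ClosurePoints

variable {ι : Type*} [Finite ι] {I : Set (ι → ℝ)} {p a : ι → ℝ}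

lemma exists_mem_le_of_mem_closure (hp : p ∈ closure I) (h : ∀ i, p i < a i) :
    ∃ z ∈ I, z ≤ a := by
  have hU : IsOpen (Set.univ.pi fun i => Set.Iio (a i)) :=
    isOpen_set_pi Set.finite_univ fun _ _ => isOpen_Iio
  obtain ⟨z, hzU, hzI⟩ := mem_closure_iff.mp hp _ hU fun i _ => h i
  exact ⟨z, hzI, fun i => (hzU i (Set.mem_univ i)).le⟩

lemma exists_mem_ge_of_mem_closure (hp : p ∈ closure I) (h : ∀ i, a i < p i) :
    ∃ z ∈ I, a ≤ z := by
  have hU : IsOpen (Set.univ.pi fun i => Set.Ioi (a i)) :=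
    isOpen_set_pi Set.finite_univ fun _ _ => isOpen_Ioi
  obtain ⟨z, hzU, hzI⟩ := mem_closure_iff.mp hp _ hU fun i _ => h i
  exact ⟨z, hzI, fun i => (hzU i (Set.mem_univ i)).le⟩

end ClosurePoints

namespace PersMod

variable {n : ℕ} {k : Type*} [Field k] {M N P : PersMod n k}

lemma ρ_comp_apply (M : PersMod n k) {x y z : Pt n} (h₁ : x ≤ y) (h₂ : y ≤ z) (v : M.V x) :
    M.ρ h₂ (M.ρ h₁ v) = M.ρ (h₁.trans h₂) v :=
  (LinearMap.congr_fun (M.ρ_comp h₁ h₂) v).symm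

section ShiftMaps

variable {a b c : ℝ}

def IsShiftNatural (φ : ∀ x : Pt n, M.V x →ₗ[k] N.V (x + diag n a)) : Prop :=
  ∀ {x y : Pt n} (h : x ≤ y), (φ y).comp (M.ρ h) = (N.ρ (add_le_add_left h _)).comp (φ x)

lemma IsShiftNatural.map_ρ {φ : ∀ x : Pt n, M.V x →ₗ[k] N.V (x + diag n a)}
    (hφ : IsShiftNatural φ) {x y : Pt n} (h : x ≤ y) (v : M.V x) :
    φ y (M.ρ h v) = N.ρ (add_le_add_left h _) (φ x v) :=
  LinearMap.congr_fun (hφ h) v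

/-- `c` is kept apart from `a + b` so that both composites of two interleavings, by `δ` then `ε`
and by `ε` then `δ`, land in the shift `δ + ε`. -/
def shiftComp (hc : a + b = c) (φ : ∀ x : Pt n, M.V x →ₗ[k] N.V (x + diag n a))
    (φ' : ∀ x : Pt n, N.V x →ₗ[k] P.V (x + diag n b)) (x : Pt n) :
    M.V x →ₗ[k] P.V (x + diag n c) :=
  (P.ρ (add_diag_add_diag x hc).le).comp ((φ' (x + diag n a)).comp (φ x))

lemma IsShiftNatural.shiftComp (hc : a + b = c)
    {φ : ∀ x : Pt n, M.V x →ₗ[k] N.V (x + diag n a)}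
    {φ' : ∀ x : Pt n, N.V x →ₗ[k] P.V (x + diag n b)}
    (hφ : IsShiftNatural φ) (hφ' : IsShiftNatural φ') :
    IsShiftNatural (shiftComp hc φ φ') := by
  intro x y h
  ext v
  simp only [PersMod.shiftComp, LinearMap.comp_apply, hφ.map_ρ, hφ'.map_ρ, ρ_comp_apply]

lemma ρ_eq_shiftComp_comp_shiftComp (ha : 0 ≤ a) (hb : 0 ≤ b) (hc : a + b = c) (hc' : b + a = c)
    {φ : ∀ x : Pt n, M.V x →ₗ[k] N.V (x + diag n a)}
    {ψ : ∀ x : Pt n, N.V x →ₗ[k] M.V (x + diag n a)}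
    {φ' : ∀ x : Pt n, N.V x →ₗ[k] P.V (x + diag n b)}
    {ψ' : ∀ x : Pt n, P.V x →ₗ[k] N.V (x + diag n b)}
    (hψ : IsShiftNatural ψ) (hψ' : IsShiftNatural ψ')
    (hM : ∀ x, M.ρ ((le_add_diag x ha).trans (le_add_diag _ ha)) = (ψ (x + diag n a)).comp (φ x))
    (hN : ∀ x, N.ρ ((le_add_diag x hb).trans (le_add_diag _ hb)) = (ψ' (x + diag n b)).comp (φ' x))
    (x : Pt n) (h : x ≤ x + diag n c + diag n c) :
    M.ρ h = (shiftComp hc' ψ' ψ (x + diag n c)).comp (shiftComp hc φ φ' x) := by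
  ext v
  have hM' := fun x v => (LinearMap.congr_fun (hM x) v).symm
  have hN' := fun x v => (LinearMap.congr_fun (hN x) v).symm
  simp only [LinearMap.comp_apply] at hM' hN'
  simp only [shiftComp, LinearMap.comp_apply, hψ'.map_ρ, hN', ρ_comp_apply, hψ.map_ρ, hM']

end ShiftMaps

lemma Interleaved.symm {δ : ℝ≥0} (h : M.Interleaved N δ) : N.Interleaved M δ :=
  let ⟨φ, ψ, hφ, hψ, hM, hN⟩ := h
  ⟨ψ, φ, hψ, hφ, hN, hM⟩

lemma Interleaved.trans {δ ε : ℝ≥0} (h₁ : M.Interleaved N δ) (h₂ : N.Interleaved P ε) :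
    M.Interleaved P (δ + ε) := by
  obtain ⟨φ, ψ, hφ, hψ, hM, hN⟩ := h₁
  obtain ⟨φ', ψ', hφ', hψ', hN', hP⟩ := h₂
  have hc : (δ : ℝ) + ε = ↑(δ + ε) := (NNReal.coe_add δ ε).symm
  have hc' : (ε : ℝ) + δ = ↑(δ + ε) := by rw [add_comm, hc]
  exact ⟨shiftComp hc φ φ', shiftComp hc' ψ' ψ, IsShiftNatural.shiftComp hc hφ hφ',
    IsShiftNatural.shiftComp hc' hψ' hψ,
    fun x => ρ_eq_shiftComp_comp_shiftComp δ.coe_nonneg ε.coe_nonneg hc hc' hψ hψ' hM hN' x _,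
    fun x => ρ_eq_shiftComp_comp_shiftComp ε.coe_nonneg δ.coe_nonneg hc' hc hφ' hφ hP hN x _⟩

lemma dI_le_of_interleaved {δ : ℝ≥0} (h : M.Interleaved N δ) : M.dI N ≤ δ :=
  iInf₂_le δ h

lemma dI_comm (M N : PersMod n k) : M.dI N = N.dI M :=
  le_antisymm (le_iInf₂ fun _ h => dI_le_of_interleaved h.symm)
    (le_iInf₂ fun _ h => dI_le_of_interleaved h.symm)

lemma dI_triangle (M N P : PersMod n k) : M.dI P ≤ M.dI N + N.dI P :=
  calc M.dI P
      ≤ ⨅ (δ : ℝ≥0) (_ : M.Interleaved N δ) (ε : ℝ≥0) (_ : N.Interleaved P ε),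
          (δ + ε : ℝ≥0∞) :=
        le_iInf₂ fun δ hδ => le_iInf₂ fun ε hε =>
          (dI_le_of_interleaved (hδ.trans hε)).trans_eq (ENNReal.coe_add δ ε)
    _ = M.dI N + N.dI P := by simp only [dI, ENNReal.iInf_add]; simp only [ENNReal.add_iInf]

lemma dI_eq_zero_of_forall_interleaved (h : ∀ δ : ℝ≥0, 0 < δ → M.Interleaved N δ) :
    M.dI N = 0 :=
  nonpos_iff_eq_zero.mp <| ENNReal.le_of_forall_pos_le_add fun δ hδ _ => by
    simpa using dI_le_of_interleaved (h δ hδ)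

lemma dI_eq_dI_of_dI_eq_zero {M M' N N' : PersMod n k} (hM : M.dI M' = 0) (hN : N.dI N' = 0) :
    M.dI N = M'.dI N' := by
  have hM' : M'.dI M = 0 := by rw [dI_comm, hM]
  have hN' : N'.dI N = 0 := by rw [dI_comm, hN]
  apply le_antisymm
  · calc M.dI N ≤ M.dI M' + (M'.dI N' + N'.dI N) :=
          (dI_triangle M M' N).trans (add_le_add le_rfl (dI_triangle M' N' N))
      _ = M'.dI N' := by rw [hM, hN', zero_add, add_zero]
  · calc M'.dI N' ≤ M'.dI M + (M.dI N + N.dI N') :=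
          (dI_triangle M' M N').trans (add_le_add le_rfl (dI_triangle M N N'))
      _ = M.dI N := by rw [hM', hN, zero_add, add_zero]

end PersMod

section IntervalModules

variable {n : ℕ} {k : Type*} [Field k]

lemma IsPInterval.ordConnected {I : Set (Pt n)} (hI : IsPInterval I) : I.OrdConnected :=
  ⟨fun _ hp _ hq _ hr => hI.2.1 _ hp _ hq _ hr.1 hr.2⟩

lemma subOf_coe_eq_zero {I : Set (Pt n)} {x : Pt n} (hx : x ∉ I) (v : subOf k I x) :
    (v : k) = 0 := by
  have hv := v.2
  simpa only [subOf, if_neg hx, Submodule.mem_bot] using hv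

lemma subOf_linearMap_ext {I J : Set (Pt n)} {x y : Pt n} {f g : subOf k I x →ₗ[k] subOf k J y}
    (h : x ∈ I → ∀ v, (f v : k) = g v) : f = g := by
  ext v
  by_cases hx : x ∈ I
  · exact h hx v
  · have hv : v = 0 := Subtype.ext (subOf_coe_eq_zero hx v)
    rw [hv, map_zero, map_zero]

/-- `stepFun` between two different intervals. -/
def crossStep (I J : Set (Pt n)) (x y : Pt n) : subOf k I x →ₗ[k] subOf k J y where
  toFun v := ⟨if y ∈ J then (v : k) else 0, by
    by_cases hy : y ∈ J
    · simp [subOf, hy]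
    · simp [hy]⟩
  map_add' a b := by
    by_cases hy : y ∈ J <;> · apply Subtype.ext; simp [hy]
  map_smul' c a := by
    by_cases hy : y ∈ J <;> · apply Subtype.ext; simp [hy]

lemma IntervalMod.interleaved_of_shift_mem {I J : Set (Pt n)} (hI : IsPInterval I)
    (hJ : IsPInterval J) {δ : ℝ≥0}
    (hIJ : ∀ ⦃x y⦄, x ≤ y → x ∈ I → y + diag n δ ∈ J → y ∈ I ∧ x + diag n δ ∈ J)
    (hJI : ∀ ⦃x y⦄, x ≤ y → x ∈ J → y + diag n δ ∈ I → y ∈ J ∧ x + diag n δ ∈ I)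
    (hIJI : ∀ ⦃x⦄, x ∈ I → x + diag n δ + diag n δ ∈ I → x + diag n δ ∈ J)
    (hJIJ : ∀ ⦃x⦄, x ∈ J → x + diag n δ + diag n δ ∈ J → x + diag n δ ∈ I) :
    (IntervalMod k I hI).Interleaved (IntervalMod k J hJ) δ := by
  -- after evaluation at a vector, each identity is an equality of nested `if`s on membership
  refine ⟨fun x => crossStep I J x _, fun x => crossStep J I x _, ?_, ?_, ?_, ?_⟩
  · intro x y h
    refine subOf_linearMap_ext fun hx v => ?_
    show (if _ then (if _ then _ else _) else _ : k) = (if _ then (if _ then _ else _) else _)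
    by_cases hy : y + diag n δ ∈ J
    · obtain ⟨hyI, hxJ⟩ := hIJ h hx hy
      simp [hy, hyI, hxJ]
    · simp [hy]
  · intro x y h
    refine subOf_linearMap_ext fun hx v => ?_
    show (if _ then (if _ then _ else _) else _ : k) = (if _ then (if _ then _ else _) else _)
    by_cases hy : y + diag n δ ∈ I
    · obtain ⟨hyJ, hxI⟩ := hJI h hx hy
      simp [hy, hyJ, hxI]
    · simp [hy]
  · intro x
    refine subOf_linearMap_ext fun hx v => ?_
    show (if _ then _ else _ : k) = (if _ then (if _ then _ else _) else _)
    by_cases h2 : x + diag n δ + diag n δ ∈ I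
    · simp [h2, hIJI hx h2]
    · simp [h2]
  · intro x
    refine subOf_linearMap_ext fun hx v => ?_
    show (if _ then _ else _ : k) = (if _ then (if _ then _ else _) else _)
    by_cases h2 : x + diag n δ + diag n δ ∈ J
    · simp [h2, hJIJ hx h2]
    · simp [h2]

lemma IntervalMod.interleaved_closure {I : Set (Pt n)} (hI : IsPInterval I)
    (hIc : IsPInterval (closure I)) {δ : ℝ≥0} (hδ : 0 < δ) :
    (IntervalMod k I hI).Interleaved (IntervalMod k (closure I) hIc) δ := by
  have hδ' : (0 : ℝ) < δ := hδ
  have hI' := hI.ordConnected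
  have hC := hIc.ordConnected
  have hle : ∀ x : Pt n, x ≤ x + diag n δ := fun x => le_add_diag x δ.coe_nonneg
  refine interleaved_of_shift_mem hI hIc ?_ ?_ ?_ ?_
  · intro x y hxy hx hy
    obtain ⟨z, hz, hyz⟩ := exists_mem_ge_of_mem_closure hy (lt_add_diag_apply y hδ')
    exact ⟨hI'.out hx hz ⟨hxy, hyz⟩,
      hC.out (subset_closure hx) hy ⟨hle x, add_le_add_left hxy _⟩⟩
  · intro x y hxy hx hy
    obtain ⟨z, hz, hzx⟩ := exists_mem_le_of_mem_closure hx (lt_add_diag_apply x hδ')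
    exact ⟨hC.out hx (subset_closure hy) ⟨hxy, hle y⟩,
      hI'.out hz hy ⟨hzx, add_le_add_left hxy _⟩⟩
  · intro x hx hx₂
    exact subset_closure (hI'.out hx hx₂ ⟨hle x, hle _⟩)
  · intro x hx hx₂
    obtain ⟨z, hz, hzx⟩ := exists_mem_le_of_mem_closure hx (lt_add_diag_apply x hδ')
    obtain ⟨w, hw, hxw⟩ := exists_mem_ge_of_mem_closure hx₂ (lt_add_diag_apply _ hδ')
    exact hI'.out hz hw ⟨hzx, hxw⟩

end IntervalModules

/-- d_I(M, M̄) = 0 for the closure module M̄, and consequently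
d_I(M,N) = d_I(M̄, N̄). (The closure of an interval is an interval; this fact is
recorded as the hypotheses `hMc`, `hNc` needed to form the closure modules.) -/
theorem stmt3 {n : ℕ} {k : Type*} [Field k] (IM IN : Set (Pt n))
    (hM : IsPInterval IM) (hN : IsPInterval IN)
    (hMc : IsPInterval (closure IM)) (hNc : IsPInterval (closure IN)) :
    (IntervalMod k IM hM).dI (IntervalMod k (closure IM) hMc) = 0 ∧
    (IntervalMod k IM hM).dI (IntervalMod k IN hN)
      = (IntervalMod k (closure IM) hMc).dI (IntervalMod k (closure IN) hNc) := by
  have hMM := PersMod.dI_eq_zero_of_forall_interleaved fun _ hδ =>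
    IntervalMod.interleaved_closure (k := k) hM hMc hδ
  have hNN := PersMod.dI_eq_zero_of_forall_interleaved fun _ hδ =>
    IntervalMod.interleaved_closure (k := k) hN hNc hδ
  exact ⟨hMM, PersMod.dI_eq_dI_of_dI_eq_zero hMM hNN⟩

end
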